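/- If G is a connected graph on n vertices with maximum degree Δ(G) < n − 1, then γ_t(G) ≤ n − Δ(G). -/

import Mathlib

/-!
Let `v` be a vertex of maximum degree and `T` the set of vertices outside its closed
neighbourhood, so `|T| = n - 1 - Δ`, and `T` is nonempty. By connectivity some edge `wx` joins
`N(v)` to `T`. Then `v`, `w` and one chosen neighbour of each vertex of `T \ {x}` form a total
dominating set: `v` dominates `N(v)`, `w` dominates `v` and `x`. It has at most
`2 + (|T| - 1) = n - Δ` vertices.
-/

open Finset

/-- A total dominating set: every vertex has a neighbor in `S`. -/
def SimpleGraph.TotalDominatingSet {V : Type*} (G : SimpleGraph V) (S : Set V) : Prop :=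
  ∀ v : V, ∃ u ∈ S, G.Adj v u

/-- The total domination number: minimum cardinality of a total dominating set. -/
noncomputable def SimpleGraph.totalDominationNumber {V : Type*} (G : SimpleGraph V) : ℕ :=
  sInf {k | ∃ S : Set V, G.TotalDominatingSet S ∧ S.ncard = k}

namespace SimpleGraph

variable {V : Type*} {G : SimpleGraph V}

theorem TotalDominatingSet.totalDominationNumber_le_ncard {S : Set V}
    (hS : G.TotalDominatingSet S) : G.totalDominationNumber ≤ S.ncard :=
  Nat.sInf_le ⟨S, hS, rfl⟩

theorem Preconnected.exists_adj_mem_notMem (hG : G.Preconnected) {s : Set V} {u v : V}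
    (hu : u ∈ s) (hv : v ∉ s) : ∃ a ∈ s, ∃ b ∉ s, G.Adj a b := by
  obtain ⟨p⟩ := hG u v
  obtain ⟨d, -, hd⟩ := p.exists_boundary_dart s hu hv
  exact ⟨d.fst, hd.1, d.snd, hd.2, d.adj⟩

theorem exists_card_le_forall_exists_adj [DecidableEq V] (A : Finset V)
    (hA : ∀ a ∈ A, ∃ b, G.Adj a b) : ∃ S : Finset V, #S ≤ #A ∧ ∀ a ∈ A, ∃ b ∈ S, G.Adj a b := by
  choose f hf using hA
  refine ⟨A.attach.image fun a => f a.1 a.2, card_image_le.trans_eq card_attach, fun a ha => ?_⟩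
  exact ⟨f a ha, mem_image_of_mem _ (mem_attach _ ⟨a, ha⟩), hf a ha⟩

theorem totalDominationNumber_le_card_sub_degree [Fintype V] [DecidableRel G.Adj]
    (hconn : G.Connected) (v : V) (hv : G.degree v + 1 < Fintype.card V) :
    G.totalDominationNumber ≤ Fintype.card V - G.degree v := by
  classical
  set T := (insert v (G.neighborFinset v))ᶜ
  have hT : #T = Fintype.card V - (G.degree v + 1) := by
    rw [card_compl, card_insert_of_notMem (by simp), card_neighborFinset_eq_degree]
  obtain ⟨t, ht⟩ : T.Nonempty := card_pos.mp (by omega)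
  obtain ⟨w, hw, x, hx, hwx⟩ := hconn.preconnected.exists_adj_mem_notMem
    (s := ↑(insert v (G.neighborFinset v))) (u := v) (by simp) (by simpa [T] using ht)
  have hxT : x ∈ T := by simpa [T] using hx
  have hvw : G.Adj v w := by
    rcases mem_insert.mp hw with rfl | hw
    · simp_all [T]
    · exact (mem_neighborFinset _ _ _).mp hw
  have : Nontrivial V := Fintype.one_lt_card_iff_nontrivial.mp (by omega)
  obtain ⟨S, hS, hSdom⟩ := exists_card_le_forall_exists_adj (G := G) (T.erase x)
    fun a _ => hconn.preconnected.exists_adj_of_nontrivial a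
  have hdom : G.TotalDominatingSet ↑(insert v (insert w S)) := by
    intro y
    by_cases hyv : y = v
    · exact ⟨w, by simp, hyv ▸ hvw⟩
    by_cases hy : G.Adj v y
    · exact ⟨v, by simp, hy.symm⟩
    by_cases hyx : y = x
    · exact ⟨w, by simp, hyx ▸ hwx.symm⟩
    obtain ⟨b, hb, hyb⟩ := hSdom y (by simp [T, hyv, hy, hyx])
    exact ⟨b, by simp [hb], hyb⟩
  calc G.totalDominationNumber ≤ #(insert v (insert w S)) :=
        hdom.totalDominationNumber_le_ncard.trans_eq (Set.ncard_coe_finset _)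
    _ ≤ #S + 2 := (card_insert_le _ _).trans (Nat.succ_le_succ (card_insert_le _ _))
    _ ≤ Fintype.card V - G.degree v := by
        have := card_erase_of_mem hxT
        have := card_pos.mpr ⟨x, hxT⟩
        omega

end SimpleGraph

theorem total_domination_le_card_sub_maxDegree
    {V : Type*} [Fintype V] (G : SimpleGraph V) [DecidableRel G.Adj]
    (hconn : G.Connected) (hΔ : G.maxDegree < Fintype.card V - 1) :
    G.totalDominationNumber ≤ Fintype.card V - G.maxDegree := by
  have : Nonempty V := hconn.nonempty
  obtain ⟨v, hv⟩ := G.exists_maximal_degree_vertex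
  rw [hv] at hΔ ⊢
  exact G.totalDominationNumber_le_card_sub_degree hconn v (by omega)
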